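/- Let |ψ⟩ = a0|00⟩ + a1|11⟩ and |φ⟩ = b0|00⟩ + b1|11⟩ be vectors in ℂ²⊗ℂ² with a0 ≥ a1 ≥ 0, b0 ≥ b1 ≥ 0, a0² + a1² = 1 and b0² + b1² = 1. Then there exist 2×2 unitary matrices U1, U2 with |φ⟩ = (U1⊗U2)|ψ⟩ if and only if b0 = a0 and b1 = a1. -/

import Mathlib

/-!
Reading a vector of `ℂ² ⊗ ℂ²` as the column-stacking `vec X` of a `2 × 2` matrix `X`, the local
unitary `U₁ ⊗ U₂` acts as `X ↦ U₂ X U₁ᵀ`, and the Schmidt vector `a0|00⟩ + a1|11⟩` is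
`vec (diag(a0, a1))`. Under `X ↦ U X V` with `U, V` unitary, `X Xᴴ` is conjugated by `U`, so its
trace `a0² + a1²` and determinant `a0² a1²` are invariants; for ordered nonnegative coefficients
these two numbers determine `a0` and `a1`.
-/

open Matrix Kronecker

/-- The vector `a0|00⟩ + a1|11⟩` in `ℂ² ⊗ ℂ²`. -/
noncomputable def schmidtVec (a0 a1 : ℝ) : Fin 2 × Fin 2 → ℂ :=
  fun p => if p = (0, 0) then (a0 : ℂ) else if p = (1, 1) then (a1 : ℂ) else 0

namespace Matrix

variable {n α : Type*} [Fintype n] [DecidableEq n]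

section Unitary

variable [CommRing α] [StarRing α] {U V : Matrix n n α}

theorem unitary_mul_mul_conjTranspose (hU : U ∈ unitaryGroup n α) (hV : V ∈ unitaryGroup n α)
    (A : Matrix n n α) : U * A * V * (U * A * V)ᴴ = U * (A * Aᴴ) * U⁻¹ := by
  rw [inv_eq_left_inv (mem_unitaryGroup_iff'.mp hU)]
  simp only [conjTranspose_mul, Matrix.mul_assoc]
  rw [← Matrix.mul_assoc V, ← star_eq_conjTranspose V, mem_unitaryGroup_iff.mp hV, Matrix.one_mul,
    star_eq_conjTranspose]

theorem trace_unitary_mul_mul_conjTranspose (hU : U ∈ unitaryGroup n α)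
    (hV : V ∈ unitaryGroup n α) (A : Matrix n n α) :
    trace (U * A * V * (U * A * V)ᴴ) = trace (A * Aᴴ) := by
  rw [unitary_mul_mul_conjTranspose hU hV, trace_conj (Unitary.isUnit_coe (U := ⟨U, hU⟩))]

theorem det_unitary_mul_mul_conjTranspose (hU : U ∈ unitaryGroup n α)
    (hV : V ∈ unitaryGroup n α) (A : Matrix n n α) :
    det (U * A * V * (U * A * V)ᴴ) = det (A * Aᴴ) := by
  rw [unitary_mul_mul_conjTranspose hU hV, det_conj (Unitary.isUnit_coe (U := ⟨U, hU⟩))]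

end Unitary

theorem diagonal_ofReal_mul_conjTranspose (d : n → ℝ) :
    diagonal (fun i => (d i : ℂ)) * (diagonal fun i => (d i : ℂ))ᴴ =
      diagonal fun i => ((d i ^ 2 : ℝ) : ℂ) := by
  simp [diagonal_conjTranspose, diagonal_mul_diagonal, sq]

end Matrix

theorem schmidtVec_eq_vec_diagonal (a0 a1 : ℝ) :
    schmidtVec a0 a1 = vec (diagonal fun i => ((![a0, a1] i : ℝ) : ℂ)) := by
  ext ⟨i, j⟩
  fin_cases i <;> fin_cases j <;> simp [schmidtVec]

theorem eq_of_sq_add_sq_eq_of_sq_mul_sq_eq {a0 a1 b0 b1 : ℝ} (ha0 : a1 ≤ a0) (ha1 : 0 ≤ a1)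
    (hb0 : b1 ≤ b0) (hb1 : 0 ≤ b1) (hsum : b0 ^ 2 + b1 ^ 2 = a0 ^ 2 + a1 ^ 2)
    (hprod : b0 ^ 2 * b1 ^ 2 = a0 ^ 2 * a1 ^ 2) : b0 = a0 ∧ b1 = a1 := by
  have hmul : b0 * b1 = a0 * a1 := by
    rw [← mul_pow, ← mul_pow] at hprod
    exact (pow_left_inj₀ (by nlinarith) (by nlinarith) two_ne_zero).mp hprod
  have hadd : b0 + b1 = a0 + a1 := (pow_left_inj₀ (by linarith) (by linarith) two_ne_zero).mp
    (by linear_combination hsum + 2 * hmul)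
  have hsub : b0 - b1 = a0 - a1 := (pow_left_inj₀ (by linarith) (by linarith) two_ne_zero).mp
    (by linear_combination hsum - 2 * hmul)
  constructor <;> linarith

theorem pure_schmidt_LU_iff_general (a0 a1 b0 b1 : ℝ)
    (ha0 : a1 ≤ a0) (ha1 : 0 ≤ a1) (hb0 : b1 ≤ b0) (hb1 : 0 ≤ b1) :
    (∃ U1 U2 : Matrix (Fin 2) (Fin 2) ℂ,
        U1 ∈ Matrix.unitaryGroup (Fin 2) ℂ ∧ U2 ∈ Matrix.unitaryGroup (Fin 2) ℂ ∧
        schmidtVec b0 b1 = (U1 ⊗ₖ U2).mulVec (schmidtVec a0 a1)) ↔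
      b0 = a0 ∧ b1 = a1 := by
  constructor
  · rintro ⟨U1, U2, hU1, hU2, h⟩
    set Da := diagonal fun i => ((![a0, a1] i : ℝ) : ℂ)
    set Db := diagonal fun i => ((![b0, b1] i : ℝ) : ℂ)
    have hD : Db = U2 * Da * U1ᵀ := vec_inj.mp <| by
      rw [← schmidtVec_eq_vec_diagonal, h, schmidtVec_eq_vec_diagonal, kronecker_mulVec_vec]
    have hU1T : U1ᵀ ∈ unitaryGroup (Fin 2) ℂ := transpose_mem_unitaryGroup_iff.mpr hU1
    have htrace := hD ▸ trace_unitary_mul_mul_conjTranspose hU2 hU1T Da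
    have hdet := hD ▸ det_unitary_mul_mul_conjTranspose hU2 hU1T Da
    simp only [Da, Db, diagonal_ofReal_mul_conjTranspose, trace_diagonal, det_diagonal,
      Fin.sum_univ_two, Fin.prod_univ_two] at htrace hdet
    exact eq_of_sq_add_sq_eq_of_sq_mul_sq_eq ha0 ha1 hb0 hb1 (by exact_mod_cast htrace)
      (by exact_mod_cast hdet)
  · rintro ⟨rfl, rfl⟩
    exact ⟨1, 1, one_mem _, one_mem _, by simp⟩

/-- **Corollary.** Two pure states in Schmidt form `a0|00⟩ + a1|11⟩` and
`b0|00⟩ + b1|11⟩`, with ordered nonnegative Schmidt coefficients, are local unitary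
equivalent iff their Schmidt coefficients coincide. -/
theorem pure_schmidt_LU_iff (a0 a1 b0 b1 : ℝ)
    (ha0 : a1 ≤ a0) (ha1 : 0 ≤ a1) (hb0 : b1 ≤ b0) (hb1 : 0 ≤ b1)
    (hna : a0 ^ 2 + a1 ^ 2 = 1) (hnb : b0 ^ 2 + b1 ^ 2 = 1) :
    (∃ U1 U2 : Matrix (Fin 2) (Fin 2) ℂ,
        U1 ∈ Matrix.unitaryGroup (Fin 2) ℂ ∧ U2 ∈ Matrix.unitaryGroup (Fin 2) ℂ ∧
        schmidtVec b0 b1 = (U1 ⊗ₖ U2).mulVec (schmidtVec a0 a1)) ↔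
      b0 = a0 ∧ b1 = a1 :=
  pure_schmidt_LU_iff_general a0 a1 b0 b1 ha0 ha1 hb0 hb1
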